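/- Let X ⊆ A^ℤ be a transitive subshift and let μ be an S-invariant Borel probability measure on X. For n ≥ 1 let d(μ, n) be the dimension of the ℚ-vector space spanned by { μ([u]) : u ∈ L_n(X) } ⊆ ℝ, and let |K_{n−1}| be the total number of connected components of the extension graphs Γ_X(u) over all u ∈ L_{n−1}(X). Then for each n ≥ 1, d(μ, n) ≤ p_X(n) − |K_{n−1}| + 1. -/

import Mathlib

/-!
Write `n = m + 1`. A factor `u = a w` of length `m + 1` determines the component `λ u` of the left
vertex `a` in `Γ(w)`, and a factor `u = w b` the component `ρ u` of the right vertex `b` in `Γ(w)`.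
For every weight `f` on components, `∑ f (λ u) μ[u] = ∑ f (ρ u) μ[u]`: splitting `[a w]` by the
next letter and `[w b]` (via shift invariance) by the previous one, both sides become sums over
factors `a w b` of length `m + 2`, and `a`, `b` lie in the same component of `Γ(w)`. So every
`u ↦ f (λ u) - f (ρ u)` is a rational relation between the cylinder measures. Only constant `f`
give the zero relation, since along a dense orbit consecutive windows `u, u'` satisfy
`λ u = ρ u'`, which chains all components together. Hence the relations have rank at least
`|K_{n-1}| - 1`.
-/

open Filter Topology MeasureTheory

namespace SAdicPaper

variable {A B : Type*}

/-! ### Basic symbolic dynamics on the full shift `ℤ → A` -/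

/-- The shift map `S` on the full shift. -/
def shift (x : ℤ → A) : ℤ → A := fun n => x (n + 1)

/-- The iterate `S^k` of the shift, for `k : ℤ`. -/
def shiftIter (k : ℤ) (x : ℤ → A) : ℤ → A := fun n => x (n + k)

/-- The finite word `x_i x_{i+1} ⋯ x_{i+l-1}`. -/
def window (x : ℤ → A) (i : ℤ) (l : ℕ) : List A :=
  (List.range l).map fun k => x (i + (k : ℤ))

/-- A subshift: a closed shift-invariant subset of the full shift. -/
def IsSubshift [TopologicalSpace A] (X : Set (ℤ → A)) : Prop :=
  IsClosed X ∧ shift '' X = X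

/-- The language of a set of bi-infinite sequences: all finite factors of its points. -/
def langOf (X : Set (ℤ → A)) : Set (List A) :=
  {w | ∃ x ∈ X, ∃ i : ℤ, w = window x i w.length}

/-- The (two-sided) orbit of a point under the shift. -/
def orbit (x : ℤ → A) : Set (ℤ → A) := Set.range fun k : ℤ => shiftIter k x

/-- A minimal subshift: nonempty and every orbit is dense. -/
def IsMinimalSubshift [TopologicalSpace A] (X : Set (ℤ → A)) : Prop :=
  IsSubshift X ∧ X.Nonempty ∧ ∀ x ∈ X, X ⊆ closure (orbit x)

/-- A transitive subshift: some orbit is dense. -/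
def IsTransitiveSubshift [TopologicalSpace A] (X : Set (ℤ → A)) : Prop :=
  IsSubshift X ∧ ∃ x ∈ X, X ⊆ closure (orbit x)

/-- `α` is a continuous additive eigenvalue of `(X, S)`: there is a continuous
`g : X → ℝ/ℤ` with `g (S x) = g x + α (mod ℤ)`. -/
def IsEigenvalue [TopologicalSpace A] (X : Set (ℤ → A)) (α : ℝ) : Prop :=
  ∃ g : (ℤ → A) → AddCircle (1 : ℝ), ContinuousOn g X ∧
    ∀ x ∈ X, g (shift x) = g x + (α : AddCircle (1 : ℝ))

/-- `‖x‖`: distance from a real number to the nearest integer. -/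
noncomputable def dnint (x : ℝ) : ℝ := |x - round x|

/-- `{x}`: the centered fractional part, the unique element of `[-1/2, 1/2)`
such that `x + {x}` is an integer. -/
noncomputable def cfrac (x : ℝ) : ℝ := (⌈x - 1 / 2⌉ : ℤ) - x

/-- The cylinder `[u] = {x ∈ X : x_{[0,|u|)} = u}`. -/
def cyl (X : Set (ℤ → A)) (u : List A) : Set (ℤ → A) :=
  {x ∈ X | window x 0 u.length = u}

/-- The factor complexity `p_X(n)`. -/
noncomputable def pcomplex (X : Set (ℤ → A)) (n : ℕ) : ℕ :=
  Set.ncard {w : List A | w ∈ langOf X ∧ w.length = n}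

/-! ### Letter-coboundaries -/

/-- The extension of a map `c : A → ℝ` to the monoid morphism `A* → (ℝ, +)`. -/
def wsum (c : A → ℝ) (w : List A) : ℝ := (w.map c).sum

/-- `w` is a return word to the letter `a` in `X`: `w ++ [a] ∈ L(X)` and `w ++ [a]`
contains exactly two occurrences of `a`, one as a prefix and one as a suffix. -/
def IsReturnWord (X : Set (ℤ → A)) (a : A) (w : List A) : Prop :=
  w ++ [a] ∈ langOf X ∧ w.head? = some a ∧
    ∀ (i : ℕ) (h : i < w.length), 0 < i → w.get ⟨i, h⟩ ≠ a

/-- A letter-coboundary on `X` (identified with its values on letters):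
a morphism `A* → (ℝ, +)` vanishing on all return words to letters. -/
def IsLetterCoboundary (X : Set (ℤ → A)) (c : A → ℝ) : Prop :=
  ∀ (a : A) (w : List A), IsReturnWord X a w → wsum c w = 0

/-- `w` is a return word to the (nonempty) word `u` in `X`. -/
def IsReturnWordTo (X : Set (ℤ → A)) (u w : List A) : Prop :=
  w ≠ [] ∧ (w ++ u) ∈ langOf X ∧ u <+: (w ++ u) ∧
    ∀ i : ℕ, ((w ++ u).drop i).take u.length = u → i + u.length ≤ (w ++ u).length →
      i = 0 ∨ i = w.length

/-! ### Extension graphs -/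

/-- Vertices of the extension graph of `w`: two copies of the alphabet, restricted to the
letters that extend `w` on the corresponding side. -/
def extVertex (X : Set (ℤ → A)) (w : List A) : A ⊕ A → Prop
  | Sum.inl a => (a :: w) ∈ langOf X
  | Sum.inr b => (w ++ [b]) ∈ langOf X

/-- The edge relation of the extension graph: `a_L — b_R` when `a w b ∈ L(X)`. -/
def extAdjRaw (X : Set (ℤ → A)) (w : List A) (u v : A ⊕ A) : Prop :=
  ∃ a b, u = Sum.inl a ∧ v = Sum.inr b ∧ (a :: (w ++ [b])) ∈ langOf X

/-- The extension graph `Γ_X(w)` of a word `w` in `X`. -/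
def extGraph (X : Set (ℤ → A)) (w : List A) :
    SimpleGraph {v : A ⊕ A // extVertex X w v} where
  Adj u v := extAdjRaw X w u.1 v.1 ∨ extAdjRaw X w v.1 u.1
  symm := ⟨fun u v h => Or.symm h⟩
  loopless := ⟨by
    rintro ⟨v, hv⟩ h
    rcases h with ⟨a, b, h1, h2, -⟩ | ⟨a, b, h1, h2, -⟩ <;> (rw [h1] at h2; simp at h2)⟩

/-- The total number of connected components of the extension graphs of all
words of length `m` in `L(X)`. -/
noncomputable def totalComponents (X : Set (ℤ → A)) (m : ℕ) : ℕ :=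
  Nat.card (Σ w : {w : List A // w ∈ langOf X ∧ w.length = m},
    (extGraph X w.1).ConnectedComponent)

/-! ### The vector space of letter-coboundaries -/

lemma wsum_zero (w : List A) : wsum (0 : A → ℝ) w = 0 := by
  induction w with
  | nil => rfl
  | cons a t ih => simp [wsum, List.map_cons, List.sum_cons] at ih ⊢; exact ih

lemma wsum_add (c d : A → ℝ) (w : List A) :
    wsum (c + d) w = wsum c w + wsum d w := by
  induction w with
  | nil => simp [wsum]
  | cons a t ih =>
      simp only [wsum, List.map_cons, List.sum_cons, Pi.add_apply] at ih ⊢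
      rw [ih]; ring

lemma wsum_smul (r : ℝ) (c : A → ℝ) (w : List A) :
    wsum (r • c) w = r * wsum c w := by
  induction w with
  | nil => simp [wsum]
  | cons a t ih =>
      simp only [wsum, List.map_cons, List.sum_cons, Pi.smul_apply, smul_eq_mul] at ih ⊢
      rw [ih]; ring

/-- The `ℝ`-vector space `C_X` of letter-coboundaries on `X`. -/
def cobSpace (X : Set (ℤ → A)) : Submodule ℝ (A → ℝ) where
  carrier := {c | IsLetterCoboundary X c}
  zero_mem' := fun _ w _ => wsum_zero w
  add_mem' := by
    intro c d hc hd a w hw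
    rw [wsum_add, hc a w hw, hd a w hw, add_zero]
  smul_mem' := by
    intro r c hc a w hw
    rw [wsum_smul, hc a w hw, mul_zero]

/-! ### Directive sequences -/

variable {Alph : ℕ → Type*}

/-- `seg τ n k = τ_{n,n+k} = τ_n ∘ τ_{n+1} ∘ ⋯ ∘ τ_{n+k-1}`, applied to a letter. -/
def seg (τ : ∀ n, Alph (n + 1) → List (Alph n)) (n : ℕ) :
    (k : ℕ) → Alph (n + k) → List (Alph n)
  | 0, a => [a]
  | k + 1, a => (τ (n + k) a).flatMap (seg τ n k)

/-- `toZero τ n = τ_{0,n}`, applied to a letter. -/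
def toZero (τ : ∀ n, Alph (n + 1) → List (Alph n)) :
    (n : ℕ) → Alph n → List (Alph 0)
  | 0, a => [a]
  | n + 1, a => (τ n a).flatMap (toZero τ n)

/-- The height `h_n(u) = |τ_{0,n}(u)|` (so `h_0(u) = |u|`). -/
def heightW (τ : ∀ n, Alph (n + 1) → List (Alph n)) (n : ℕ) (u : List (Alph n)) : ℕ :=
  (u.flatMap (toZero τ n)).length

/-- Every `τ_n` is a substitution: non-erasing and letter-onto. -/
def IsDirective (τ : ∀ n, Alph (n + 1) → List (Alph n)) : Prop :=
  ∀ n, (∀ a : Alph (n + 1), τ n a ≠ []) ∧ ∀ b : Alph n, ∃ a : Alph (n + 1), b ∈ τ n a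

/-- The level-`n` language `L^{(n)}_τ`: the words occurring in some `τ_{n,m}(a)`, `m > n`. -/
def levelLang (τ : ∀ n, Alph (n + 1) → List (Alph n)) (n : ℕ) : Set (List (Alph n)) :=
  {w | ∃ k : ℕ, 0 < k ∧ ∃ a : Alph (n + k), w <:+: seg τ n k a}

/-- The level-`n` subshift `X^{(n)}_τ`: the points all of whose factors lie in `L^{(n)}_τ`.
`X_τ = levelShift τ 0`. -/
def levelShift (τ : ∀ n, Alph (n + 1) → List (Alph n)) (n : ℕ) : Set (ℤ → Alph n) :=
  {x | ∀ (i : ℤ) (l : ℕ), window x i l ∈ levelLang τ n}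

/-- Primitivity of a directive sequence. -/
def IsPrimitiveSeq (τ : ∀ n, Alph (n + 1) → List (Alph n)) : Prop :=
  ∀ n, ∃ k, 0 < k ∧ ∀ (a : Alph (n + k)) (b : Alph n), b ∈ seg τ n k a

/-- Positivity of a directive sequence: every letter of `A_n` occurs in every `τ_n(b)`. -/
def IsPositiveSeq (τ : ∀ n, Alph (n + 1) → List (Alph n)) : Prop :=
  ∀ (n : ℕ) (b : Alph (n + 1)) (a : Alph n), a ∈ τ n b

/-- `y` is the image of the bi-infinite sequence `x` under the substitution `σ`,
aligned so that `σ(x_0)` starts at position `0`. -/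
def SubstPoint (σ : B → List A) (x : ℤ → B) (y : ℤ → A) : Prop :=
  ∀ m : ℕ,
    window y (-(∑ t ∈ Finset.range m, ((σ (x (-1 - (t : ℤ)))).length : ℤ)))
        ((window x (-(m : ℤ)) (2 * m + 1)).flatMap σ).length
      = (window x (-(m : ℤ)) (2 * m + 1)).flatMap σ

/-- The base `B_n(a) = {τ_{0,n}(x) : x ∈ X^{(n)}_τ, x_0 = a}` of the Kakutani–Rokhlin tower. -/
def baseSet (τ : ∀ n, Alph (n + 1) → List (Alph n)) (n : ℕ) (a : Alph n) :
    Set (ℤ → Alph 0) :=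
  {y | ∃ x ∈ levelShift τ n, x 0 = a ∧ SubstPoint (toZero τ n) x y}

/-- Recognizability: for every `n ≥ 1`, the sets `S^k B_n(a)`, `a ∈ A_n`,
`0 ≤ k < h_n(a)`, are pairwise disjoint. -/
def IsRecognizable (τ : ∀ n, Alph (n + 1) → List (Alph n)) : Prop :=
  ∀ n : ℕ, 1 ≤ n → ∀ (a a' : Alph n) (k k' : ℕ),
    k < heightW τ n [a] → k' < heightW τ n [a'] → ¬(a = a' ∧ k = k') →
    Disjoint (shiftIter (k : ℤ) '' baseSet τ n a) (shiftIter (k' : ℤ) '' baseSet τ n a')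

/-- `min_{a ∈ A_n} |τ_{0,n}(a)| → ∞`. -/
def IsEverywhereGrowing (τ : ∀ n, Alph (n + 1) → List (Alph n)) : Prop :=
  ∀ N : ℕ, ∃ M : ℕ, ∀ n, M ≤ n → ∀ a : Alph n, N ≤ (toZero τ n a).length

/-- Decisiveness of an everywhere growing directive sequence. -/
def IsDecisive (τ : ∀ n, Alph (n + 1) → List (Alph n)) : Prop :=
  IsEverywhereGrowing τ ∧
  ∀ n : ℕ, ∃ l r : Alph (n + 1) → Alph n,
    ∀ a b : Alph (n + 1), [a, b] ∈ langOf (levelShift τ (n + 1)) →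
      (τ n b).head? = some (r a) ∧ (τ n a).getLast? = some (l b)

/-- Unimodularity: every incidence matrix has determinant `±1`. -/
def IsUnimodularSeq [∀ n, Fintype (Alph n)] [∀ n, DecidableEq (Alph n)]
    (τ : ∀ n, Alph (n + 1) → List (Alph n)) : Prop :=
  ∀ n, ∃ e : Alph n ≃ Alph (n + 1),
    (Matrix.det (Matrix.of fun b a : Alph n => ((τ n (e a)).count b : ℤ))).natAbs = 1

/-! ### Single substitutions -/

/-- Iteration `τ^m` of a substitution on a single alphabet, applied to a letter. -/
def substPow (τ : A → List A) : ℕ → A → List A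
  | 0, a => [a]
  | k + 1, a => (τ a).flatMap (substPow τ k)

/-- The substitutive subshift `X_τ` generated by the constant directive sequence `(τ)`. -/
def substShift (τ : A → List A) : Set (ℤ → A) :=
  {x | ∀ (i : ℤ) (l : ℕ), ∃ m : ℕ, 1 ≤ m ∧ ∃ a : A, window x i l <:+: substPow τ m a}

/-- The incidence matrix of a substitution (with real entries). -/
def incMat [DecidableEq A] (τ : A → List A) : Matrix A A ℝ :=
  Matrix.of fun b a => ((τ a).count b : ℝ)

/-- A primitive substitution: some power of its incidence matrix is strictly positive. -/
def IsPrimitiveSubst [Fintype A] [DecidableEq A] (τ : A → List A) : Prop :=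
  ∃ k : ℕ, 0 < k ∧ ∀ b a : A, 0 < (incMat τ ^ k) b a

/-- Aperiodicity: `X_τ` contains no shift-periodic point. -/
def IsAperiodicSubst (τ : A → List A) : Prop :=
  ∀ x ∈ substShift τ, ∀ p : ℕ, 0 < p → shiftIter (p : ℤ) x ≠ x

/-- The stable space `V_{X_τ}` of row vectors `v` with `v M_τ^n → 0`. -/
def stableSpace [Fintype A] [DecidableEq A] (τ : A → List A) : Submodule ℝ (A → ℝ) where
  carrier := {v | Tendsto (fun n : ℕ => Matrix.vecMul v (incMat τ ^ n)) atTop (nhds 0)}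
  zero_mem' := by
    simp only [Set.mem_setOf_eq, Matrix.zero_vecMul]
    exact tendsto_const_nhds
  add_mem' := by
    intro u v hu hv
    have := hu.add hv
    simp only [Set.mem_setOf_eq] at *
    simpa [Matrix.add_vecMul] using this
  smul_mem' := by
    intro r v hv
    have := hv.const_smul r
    simp only [Set.mem_setOf_eq] at *
    simpa [Matrix.smul_vecMul] using this

/-- `X` is balanced on the letter `a`. -/
def IsBalancedOnLetter [DecidableEq A] (X : Set (ℤ → A)) (a : A) : Prop :=
  ∃ C : ℕ, 0 < C ∧ ∀ w ∈ langOf X, ∀ w' ∈ langOf X, w.length = w'.length →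
    |(w.count a : ℤ) - (w'.count a : ℤ)| ≤ (C : ℤ)

/-- `X` is balanced on letters. -/
def IsBalancedOnLetters [DecidableEq A] (X : Set (ℤ → A)) : Prop :=
  ∀ a : A, IsBalancedOnLetter X a

/-- A function `f : X → ℝ` is balanced on a (minimal) subshift `X`. -/
def IsBalancedFn (X : Set (ℤ → A)) (f : (ℤ → A) → ℝ) : Prop :=
  ∃ C : ℝ, 0 < C ∧ ∀ x ∈ X, ∀ y ∈ X, ∀ n : ℕ, 1 ≤ n →
    |∑ i ∈ Finset.range (n + 1), (f (shiftIter (i : ℤ) x) - f (shiftIter (i : ℤ) y))| ≤ C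
theorem finrank_span_range_add_card_le {𝕜 M L K : Type*} [Field 𝕜] [AddCommGroup M]
    [Module 𝕜 M] [Fintype L] [Fintype K] {s p : L → K} {ν : L → M}
    (hbal : ∀ f : K → 𝕜, ∑ u, f (s u) • ν u = ∑ u, f (p u) • ν u)
    (hconn : ∀ k k', Relation.EqvGen (fun k k' => ∃ u, s u = k ∧ p u = k') k k') :
    Module.finrank 𝕜 (Submodule.span 𝕜 (Set.range ν)) + Nat.card K ≤ Nat.card L + 1 := by
  set φ := Fintype.linearCombination 𝕜 ν
  set ψ : (K → 𝕜) →ₗ[𝕜] L → 𝕜 := LinearMap.funLeft 𝕜 𝕜 s - LinearMap.funLeft 𝕜 𝕜 p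
  have hψφ : LinearMap.range ψ ≤ LinearMap.ker φ := by
    rintro _ ⟨f, rfl⟩
    simp [φ, ψ, Fintype.linearCombination_apply, sub_smul, hbal f]
  have hkerψ : LinearMap.ker ψ ≤ Submodule.span 𝕜 {1} := by
    intro f hf
    have hconst (k k' : K) : f k = f k' := by
      induction hconn k k' with
      | rel _ _ h =>
        obtain ⟨u, rfl, rfl⟩ := h
        exact sub_eq_zero.1 (congrFun hf u)
      | refl => rfl
      | symm _ _ _ ih => exact ih.symm
      | trans _ _ _ _ _ ih ih' => exact ih.trans ih'
    rcases isEmpty_or_nonempty K with hK | ⟨⟨k₀⟩⟩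
    · simp [Subsingleton.elim f 0]
    · exact Submodule.mem_span_singleton.2 ⟨f k₀, funext fun k => by simp [hconst k₀ k]⟩
  have h1 := LinearMap.finrank_range_add_finrank_ker φ
  have h2 := LinearMap.finrank_range_add_finrank_ker ψ
  have h3 := Submodule.finrank_mono hψφ
  have h4 := (Submodule.finrank_mono hkerψ).trans (finrank_span_le_card ({1} : Set (K → 𝕜)))
  rw [Fintype.range_linearCombination] at h1
  simp only [Module.finrank_fintype_fun_eq_card, Set.toFinset_singleton,
    Finset.card_singleton] at h1 h2 h4
  rw [Nat.card_eq_fintype_card, Nat.card_eq_fintype_card]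
  omega

section ExtensionGraphBound

open scoped Classical

-- `window` elaborates with a coercion `List ℕ → List ℤ` (a `flatMap`); this is its usable form.
theorem window_eq_map (x : ℤ → A) (i : ℤ) (l : ℕ) :
    window x i l = (List.range l).map fun k : ℕ => x (i + k) := by
  simp [window, ← List.map_eq_flatMap]

theorem window_length (x : ℤ → A) (i : ℤ) (l : ℕ) : (window x i l).length = l := by
  simp [window_eq_map]

theorem window_add (x : ℤ → A) (i : ℤ) (l l' : ℕ) :
    window x i (l + l') = window x i l ++ window x (i + l) l' := by
  simp only [window_eq_map, List.range_add, List.map_append, List.map_map]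
  congr 2
  ext k
  simp only [Function.comp_apply, Nat.cast_add]
  ring_nf

theorem window_succ_dropLast (x : ℤ → A) (i : ℤ) (l : ℕ) :
    (window x i (l + 1)).dropLast = window x i l := by
  rw [window_add]
  exact List.dropLast_concat

theorem window_succ_tail (x : ℤ → A) (i : ℤ) (l : ℕ) :
    (window x i (l + 1)).tail = window x (i + 1) l := by
  rw [add_comm l, window_add]
  simp [window_eq_map]

theorem window_eq_ofFn (x : ℤ → A) (i : ℤ) (l : ℕ) :
    window x i l = List.ofFn fun k : Fin l => x (i + (k : ℕ)) :=
  List.ext_getElem (by simp [window_length]) (by simp [window_eq_map])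

theorem window_shiftIter (x : ℤ → A) (k i : ℤ) (l : ℕ) :
    window (shiftIter k x) i l = window x (i + k) l := by
  simp only [window_eq_map, shiftIter]
  congr 1
  ext j
  ring_nf

theorem window_shift (x : ℤ → A) (i : ℤ) (l : ℕ) :
    window (shift x) i l = window x (i + 1) l :=
  window_shiftIter x 1 i l

theorem isOpen_setOf_window_eq [TopologicalSpace A] [DiscreteTopology A]
    (i : ℤ) (l : ℕ) (u : List A) : IsOpen {x : ℤ → A | window x i l = u} := by
  have hcont : Continuous fun (x : ℤ → A) (k : Fin l) => x (i + (k : ℕ)) :=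
    continuous_pi fun k => continuous_apply _
  simp_rw [window_eq_ofFn]
  exact (isOpen_discrete {f : Fin l → A | List.ofFn f = u}).preimage hcont

theorem window_mem_langOf {X : Set (ℤ → A)} {x : ℤ → A} (hx : x ∈ X) (i : ℤ) (l : ℕ) :
    window x i l ∈ langOf X :=
  ⟨x, hx, i, by rw [window_length]⟩

theorem mem_langOf_of_prefix {X : Set (ℤ → A)} {w v : List A} (h : w <+: v)
    (hv : v ∈ langOf X) : w ∈ langOf X := by
  obtain ⟨t, rfl⟩ := h
  obtain ⟨x, hx, i, hwt⟩ := hv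
  rw [List.length_append, window_add] at hwt
  exact ⟨x, hx, i, (List.append_inj hwt (window_length ..).symm).1⟩

theorem mem_langOf_of_suffix {X : Set (ℤ → A)} {w v : List A} (h : w <:+ v)
    (hv : v ∈ langOf X) : w ∈ langOf X := by
  obtain ⟨t, rfl⟩ := h
  obtain ⟨x, hx, i, hwt⟩ := hv
  rw [List.length_append, window_add] at hwt
  exact ⟨x, hx, i + t.length, (List.append_inj hwt (window_length ..).symm).2⟩

theorem exists_window_eq_of_mem_langOf [TopologicalSpace A] [DiscreteTopology A]
    {X : Set (ℤ → A)} {x₀ : ℤ → A} (hdense : X ⊆ closure (orbit x₀))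
    {w : List A} (hw : w ∈ langOf X) : ∃ i : ℤ, window x₀ i w.length = w := by
  obtain ⟨y, hy, i, hwy⟩ := hw
  obtain ⟨_, hz, t, rfl⟩ := mem_closure_iff.mp (hdense hy) _
    (isOpen_setOf_window_eq i w.length w) hwy.symm
  exact ⟨i + t, by rwa [← window_shiftIter]⟩

abbrev Factors (X : Set (ℤ → A)) (l : ℕ) : Type _ :=
  {w : List A // w ∈ langOf X ∧ w.length = l}

instance [Finite A] (X : Set (ℤ → A)) (l : ℕ) : Finite (Factors X l) :=
  Set.Finite.to_subtype ((List.finite_length_eq A l).subset fun _ hw => hw.2)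

noncomputable instance [Finite A] (X : Set (ℤ → A)) (l : ℕ) : Fintype (Factors X l) :=
  .ofFinite _

namespace Factors

variable {X : Set (ℤ → A)} {l : ℕ}

def dropLast (v : Factors X (l + 1)) : Factors X l :=
  ⟨v.1.dropLast, mem_langOf_of_prefix (List.dropLast_prefix _) v.2.1, by simp [v.2.2]⟩

def tail (v : Factors X (l + 1)) : Factors X l :=
  ⟨v.1.tail, mem_langOf_of_suffix (List.tail_suffix _) v.2.1, by simp [v.2.2]⟩

theorem ne_nil (v : Factors X (l + 1)) : v.1 ≠ [] :=
  List.ne_nil_of_length_pos (by simp [v.2.2])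

end Factors

theorem pcomplex_eq_card (X : Set (ℤ → A)) (l : ℕ) : pcomplex X l = Nat.card (Factors X l) :=
  (Nat.card_coe_set_eq _).symm

abbrev ExtComponent (X : Set (ℤ → A)) (m : ℕ) : Type _ :=
  Σ w : Factors X m, (extGraph X w.1).ConnectedComponent

noncomputable instance [Finite A] (X : Set (ℤ → A)) (m : ℕ) : Fintype (ExtComponent X m) :=
  .ofFinite _

variable {X : Set (ℤ → A)} {m : ℕ}

def ExtComponent.mk (w : List A) (hw : w ∈ langOf X ∧ w.length = m) (v : A ⊕ A)
    (hv : extVertex X w v) : ExtComponent X m :=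
  ⟨⟨w, hw⟩, (extGraph X w).connectedComponentMk ⟨v, hv⟩⟩

theorem ExtComponent.mk_congr {w w' : List A} {v v' : A ⊕ A} {hw : w ∈ langOf X ∧ w.length = m}
    {hw' : w' ∈ langOf X ∧ w'.length = m} {hv : extVertex X w v} {hv' : extVertex X w' v'}
    (h : w = w') (h' : v = v') : ExtComponent.mk w hw v hv = ExtComponent.mk w' hw' v' hv' := by
  subst h h'
  rfl

theorem ExtComponent.mk_inl_eq_mk_inr {w : List A} {a b : A} (hw : w ∈ langOf X ∧ w.length = m)
    (ha : extVertex X w (.inl a)) (hb : extVertex X w (.inr b))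
    (hab : a :: (w ++ [b]) ∈ langOf X) :
    ExtComponent.mk w hw (.inl a) ha = ExtComponent.mk w hw (.inr b) hb :=
  congrArg (Sigma.mk _) (SimpleGraph.ConnectedComponent.sound
    (SimpleGraph.Adj.reachable (Or.inl ⟨a, b, rfl, rfl, hab⟩)))

def leftComponent (u : Factors X (m + 1)) : ExtComponent X m :=
  .mk u.tail.1 u.tail.2 (.inl (u.1.head u.ne_nil))
    (by simpa [extVertex, Factors.tail] using u.2.1)

def rightComponent (u : Factors X (m + 1)) : ExtComponent X m :=
  .mk u.dropLast.1 u.dropLast.2 (.inr (u.1.getLast u.ne_nil))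
    (by simpa only [extVertex, Factors.dropLast, List.dropLast_append_getLast] using u.2.1)

theorem leftComponent_eq {u : Factors X (m + 1)} {a : A} {w : List A} (h : u.1 = a :: w)
    (hw : w ∈ langOf X ∧ w.length = m) (ha : extVertex X w (.inl a)) :
    leftComponent u = .mk w hw (.inl a) ha :=
  ExtComponent.mk_congr (by simp [Factors.tail, h]) (by simp [h])

theorem rightComponent_eq {u : Factors X (m + 1)} {b : A} {w : List A} (h : u.1 = w ++ [b])
    (hw : w ∈ langOf X ∧ w.length = m) (hb : extVertex X w (.inr b)) :
    rightComponent u = .mk w hw (.inr b) hb :=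
  ExtComponent.mk_congr (by simp [Factors.dropLast, h]) (by simp [h])

theorem leftComponent_dropLast (v : Factors X (m + 2)) :
    leftComponent v.dropLast = rightComponent v.tail := by
  obtain ⟨a, t, hat⟩ := List.exists_cons_of_ne_nil v.ne_nil
  have ht : t ≠ [] := by simpa [Factors.tail, hat] using v.tail.ne_nil
  obtain ⟨w, b, rfl⟩ : ∃ w b, t = w ++ [b] := ⟨_, _, (List.dropLast_append_getLast ht).symm⟩
  have hv : a :: (w ++ [b]) ∈ langOf X := hat ▸ v.2.1
  have ha : extVertex X w (.inl a) := mem_langOf_of_prefix (List.prefix_append (a :: w) [b]) hv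
  have hb : extVertex X w (.inr b) := mem_langOf_of_suffix (List.suffix_cons a _) hv
  have hw : w ∈ langOf X ∧ w.length = m :=
    ⟨mem_langOf_of_prefix (List.prefix_append w [b]) hb, by simpa [hat] using v.2.2⟩
  rw [leftComponent_eq (by simp only [Factors.dropLast, hat, ← List.cons_append,
      List.dropLast_concat]) hw ha,
    rightComponent_eq (by simp [Factors.tail, hat]) hw hb]
  exact ExtComponent.mk_inl_eq_mk_inr hw ha hb hv

theorem exists_leftComponent_or_rightComponent_eq (k : ExtComponent X m) :
    ∃ u, leftComponent u = k ∨ rightComponent u = k := by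
  obtain ⟨w, c⟩ := k
  induction c using SimpleGraph.ConnectedComponent.ind with
  | h v =>
    obtain ⟨a | b, hv⟩ := v
    · exact ⟨⟨a :: w.1, hv, by simp [w.2.2]⟩, .inl (leftComponent_eq rfl w.2 hv)⟩
    · exact ⟨⟨w.1 ++ [b], hv, by simp [w.2.2]⟩, .inr (rightComponent_eq rfl w.2 hv)⟩

theorem eqvGen_leftComponent_rightComponent [TopologicalSpace A] [DiscreteTopology A]
    (hX : IsTransitiveSubshift X) (k k' : ExtComponent X m) :
    Relation.EqvGen (fun k k' => ∃ u, leftComponent u = k ∧ rightComponent u = k') k k' := by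
  obtain ⟨x₀, hx₀, hdense⟩ := hX.2
  set r := fun k k' : ExtComponent X m => ∃ u, leftComponent u = k ∧ rightComponent u = k'
  let W (l : ℕ) (i : ℤ) : Factors X l :=
    ⟨window x₀ i l, window_mem_langOf hx₀ i l, window_length ..⟩
  have hstep (i : ℤ) :
      Relation.EqvGen r (rightComponent (W (m + 1) (i + 1))) (rightComponent (W (m + 1) i)) := by
    refine .rel _ _ ⟨W (m + 1) i, ?_, rfl⟩
    have hd : (W (m + 2) i).dropLast = W (m + 1) i := Subtype.ext (window_succ_dropLast ..)
    have ht : (W (m + 2) i).tail = W (m + 1) (i + 1) := Subtype.ext (window_succ_tail ..)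
    rw [← hd, ← ht, leftComponent_dropLast]
  have hchain (i : ℤ) : Relation.EqvGen r (rightComponent (W (m + 1) i))
      (rightComponent (W (m + 1) 0)) := by
    induction i using Int.induction_on with
    | zero => exact .refl _
    | succ i ih => exact .trans _ _ _ (hstep i) ih
    | pred i ih =>
      have h := hstep (-i - 1)
      rw [sub_add_cancel] at h
      exact .trans _ _ _ (.symm _ _ h) ih
  have hroot (k : ExtComponent X m) : Relation.EqvGen r k (rightComponent (W (m + 1) 0)) := by
    obtain ⟨u, hu | hu⟩ := exists_leftComponent_or_rightComponent_eq k
    all_goals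
      obtain ⟨i, hi⟩ := exists_window_eq_of_mem_langOf hdense u.2.1
      have hu' : u = W (m + 1) i := Subtype.ext (by rw [← hi, u.2.2])
      subst hu hu'
    · exact .trans _ _ _ (.rel _ _ ⟨_, rfl, rfl⟩) (hchain i)
    · exact hchain i
  exact .trans _ _ _ (hroot k) (.symm _ _ (hroot k'))

theorem mem_cyl_iff {X : Set (ℤ → A)} {x : ℤ → A} {u : List A} :
    x ∈ cyl X u ↔ x ∈ X ∧ window x 0 u.length = u :=
  Iff.rfl

theorem mem_cyl_window {X : Set (ℤ → A)} {x : ℤ → A} (hx : x ∈ X) (l : ℕ) :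
    x ∈ cyl X (window x 0 l) :=
  ⟨hx, by rw [window_length]⟩

theorem disjoint_cyl {u v : List A} (h : u.length = v.length) (hne : u ≠ v) :
    Disjoint (cyl X u) (cyl X v) :=
  Set.disjoint_left.2 fun _ hu hv => hne (hu.2.symm.trans (h ▸ hv.2))

theorem range_measureReal_cyl [MeasurableSpace A] (μ : Measure (ℤ → A)) (l : ℕ) :
    Set.range (fun u : Factors X l => μ.real (cyl X u.1)) =
      {x : ℝ | ∃ u, u ∈ langOf X ∧ u.length = l ∧ x = (μ (cyl X u)).toReal} := by
  ext x
  constructor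
  · rintro ⟨u, rfl⟩
    exact ⟨u.1, u.2.1, u.2.2, rfl⟩
  · rintro ⟨u, hu, hl, rfl⟩
    exact ⟨⟨u, hu, hl⟩, rfl⟩

variable [Finite A]

theorem cyl_eq_biUnion_dropLast {l : ℕ} (u : Factors X l) :
    cyl X u.1 = ⋃ v ∈ Finset.univ.filter fun v : Factors X (l + 1) => v.dropLast = u,
      cyl X v.1 := by
  ext x
  simp only [Set.mem_iUnion, Finset.mem_filter, Finset.mem_univ, true_and, exists_prop,
    mem_cyl_iff, u.2.2]
  constructor
  · rintro ⟨hx, hxu⟩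
    refine ⟨⟨window x 0 (l + 1), window_mem_langOf hx 0 _, window_length ..⟩,
      Subtype.ext ?_, mem_cyl_window hx _⟩
    simpa [Factors.dropLast, window_succ_dropLast] using hxu
  · rintro ⟨v, rfl, hx, hxv⟩
    rw [v.2.2] at hxv
    simp [hx, Factors.dropLast, ← hxv, window_succ_dropLast]

theorem preimage_shift_cyl_eq_biUnion_tail [TopologicalSpace A] (hX : IsSubshift X) {l : ℕ}
    (u : Factors X l) :
    shift ⁻¹' cyl X u.1 = ⋃ v ∈ Finset.univ.filter fun v : Factors X (l + 1) => v.tail = u,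
      cyl X v.1 := by
  have hshift : ∀ x, shift x ∈ X ↔ x ∈ X := fun x => by
    conv_lhs => rw [← hX.2]
    exact (Function.LeftInverse.injective (g := shiftIter (-1)) fun x => by
      funext n; simp [shift, shiftIter]).mem_set_image
  ext x
  simp only [Set.mem_preimage, Set.mem_iUnion, Finset.mem_filter, Finset.mem_univ, true_and,
    exists_prop, mem_cyl_iff, hshift, window_shift, u.2.2]
  constructor
  · rintro ⟨hx, hxu⟩
    refine ⟨⟨window x 0 (l + 1), window_mem_langOf hx 0 _, window_length ..⟩,
      Subtype.ext ?_, mem_cyl_window hx _⟩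
    simpa [Factors.tail, window_succ_tail] using hxu
  · rintro ⟨v, rfl, hx, hxv⟩
    rw [v.2.2] at hxv
    simp [hx, Factors.tail, ← hxv, window_succ_tail]

section Measure

variable [TopologicalSpace A] [DiscreteTopology A] [MeasurableSpace A] [BorelSpace A]
  {μ : Measure (ℤ → A)} [IsFiniteMeasure μ]

theorem measurableSet_cyl (hX : IsClosed X) (u : List A) : MeasurableSet (cyl X u) :=
  hX.measurableSet.inter (isOpen_setOf_window_eq 0 u.length u).measurableSet

theorem measureReal_biUnion_cyl (hX : IsClosed X) {l : ℕ} (s : Finset (Factors X l)) :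
    μ.real (⋃ v ∈ s, cyl X v.1) = ∑ v ∈ s, μ.real (cyl X v.1) :=
  measureReal_biUnion_finset
    (fun v _ v' _ hne => disjoint_cyl (v.2.2.trans v'.2.2.symm) (Subtype.coe_injective.ne hne))
    (fun v _ => measurableSet_cyl hX v.1)

theorem sum_mul_measureReal_cyl_eq_sum_dropLast (hX : IsClosed X) {l : ℕ}
    (f : Factors X l → ℝ) :
    ∑ u, f u * μ.real (cyl X u.1) = ∑ v : Factors X (l + 1), f v.dropLast * μ.real (cyl X v.1) := by
  rw [← Finset.sum_fiberwise Finset.univ Factors.dropLast]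
  refine Finset.sum_congr rfl fun u _ => ?_
  rw [cyl_eq_biUnion_dropLast, measureReal_biUnion_cyl hX, Finset.mul_sum]
  exact Finset.sum_congr rfl fun v hv => by rw [(Finset.mem_filter.1 hv).2]

theorem sum_mul_measureReal_cyl_eq_sum_tail (hX : IsSubshift X)
    (hinv : ∀ B : Set (ℤ → A), MeasurableSet B → μ (shift ⁻¹' B) = μ B) {l : ℕ}
    (f : Factors X l → ℝ) :
    ∑ u, f u * μ.real (cyl X u.1) = ∑ v : Factors X (l + 1), f v.tail * μ.real (cyl X v.1) := by
  rw [← Finset.sum_fiberwise Finset.univ Factors.tail]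
  refine Finset.sum_congr rfl fun u _ => ?_
  have hshift : μ.real (cyl X u.1) = μ.real (shift ⁻¹' cyl X u.1) := by
    simp only [Measure.real, hinv _ (measurableSet_cyl hX.1 _)]
  rw [hshift, preimage_shift_cyl_eq_biUnion_tail hX, measureReal_biUnion_cyl hX.1, Finset.mul_sum]
  exact Finset.sum_congr rfl fun v hv => by rw [(Finset.mem_filter.1 hv).2]

theorem sum_leftComponent_mul_eq_sum_rightComponent_mul (hX : IsSubshift X)
    (hinv : ∀ B : Set (ℤ → A), MeasurableSet B → μ (shift ⁻¹' B) = μ B)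
    (f : ExtComponent X m → ℝ) :
    ∑ u, f (leftComponent u) * μ.real (cyl X u.1) =
      ∑ u, f (rightComponent u) * μ.real (cyl X u.1) := by
  calc ∑ u, f (leftComponent u) * μ.real (cyl X u.1)
      = ∑ v : Factors X (m + 2), f (leftComponent v.dropLast) * μ.real (cyl X v.1) :=
        sum_mul_measureReal_cyl_eq_sum_dropLast hX.1 (f ∘ leftComponent)
    _ = ∑ v : Factors X (m + 2), f (rightComponent v.tail) * μ.real (cyl X v.1) := by
        simp only [leftComponent_dropLast]
    _ = ∑ u, f (rightComponent u) * μ.real (cyl X u.1) :=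
        (sum_mul_measureReal_cyl_eq_sum_tail hX hinv (f ∘ rightComponent)).symm

end Measure

end ExtensionGraphBound

theorem dim_measures_le_complexity_sub_components_general
    {A : Type*} [Fintype A] [TopologicalSpace A] [DiscreteTopology A]
    [MeasurableSpace A] [BorelSpace A]
    (X : Set (ℤ → A)) (hX : IsTransitiveSubshift X)
    (μ : Measure (ℤ → A)) (hprob : IsProbabilityMeasure μ)
    (hinv : ∀ B : Set (ℤ → A), MeasurableSet B → μ (shift ⁻¹' B) = μ B)
    (n : ℕ) (hn : 1 ≤ n) :
    (Module.finrank ℚ ↥(Submodule.span ℚ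
        {x : ℝ | ∃ u, u ∈ langOf X ∧ u.length = n ∧ x = (μ (cyl X u)).toReal}) : ℤ)
      ≤ (pcomplex X n : ℤ) - (totalComponents X (n - 1) : ℤ) + 1 := by
  obtain ⟨m, rfl⟩ : ∃ m, n = m + 1 := ⟨n - 1, by omega⟩
  have hbal (f : ExtComponent X m → ℚ) :
      ∑ u, f (leftComponent u) • μ.real (cyl X u.1) =
        ∑ u, f (rightComponent u) • μ.real (cyl X u.1) := by
    simpa only [Rat.smul_def] using
      sum_leftComponent_mul_eq_sum_rightComponent_mul hX.1 hinv fun k => (f k : ℝ)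
  have key := finrank_span_range_add_card_le hbal (eqvGen_leftComponent_rightComponent hX)
  rw [range_measureReal_cyl] at key
  rw [pcomplex_eq_card, Nat.add_sub_cancel]
  change _ ≤ _ - (Nat.card (ExtComponent X m) : ℤ) + 1
  omega

/-- **Lemma 6.1.** Let `X` be a transitive subshift and `μ` an invariant Borel probability
measure on `X`.  Then for each `n ≥ 1`,
`d(μ, n) ≤ p_X(n) − |K_(n−1)| + 1`, where `d(μ, n)` is the dimension of the `ℚ`-vector
space spanned by the measures of cylinders of words of length `n`, and `|K_(n−1)|` is the
total number of connected components of the extension graphs of words of length `n − 1`. -/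
theorem dim_measures_le_complexity_sub_components
    {A : Type*} [Fintype A] [TopologicalSpace A] [DiscreteTopology A]
    [MeasurableSpace A] [BorelSpace A]
    (X : Set (ℤ → A)) (hX : IsTransitiveSubshift X)
    (μ : Measure (ℤ → A)) (hprob : IsProbabilityMeasure μ) (hXfull : μ X = 1)
    (hinv : ∀ B : Set (ℤ → A), MeasurableSet B → μ (shift ⁻¹' B) = μ B)
    (n : ℕ) (hn : 1 ≤ n) :
    (Module.finrank ℚ ↥(Submodule.span ℚ
        {x : ℝ | ∃ u, u ∈ langOf X ∧ u.length = n ∧ x = (μ (cyl X u)).toReal}) : ℤ)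
      ≤ (pcomplex X n : ℤ) - (totalComponents X (n - 1) : ℤ) + 1 :=
  dim_measures_le_complexity_sub_components_general X hX μ hprob hinv n hn

end SAdicPaper
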